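/- Let M be an internally 4-connected binary matroid with |E(M)| ≥ 11, let e ∈ E(M) be such that M\e is (4, 4)-connected, let Q be a quad of M\e, and let x ∈ Q. Then M\x\e and M\x are 3-connected. -/

import Mathlib

open scoped Matroid

universe u v

namespace Matroid

variable {α : Type u} {β : Type v}

/-- Deletion of a set of elements from a matroid. -/
def Del (M : Matroid α) (D : Set α) : Matroid α := M ↾ (M.E \ D)

/-- Contraction of a set of elements in a matroid. -/
def Con (M : Matroid α) (C : Set α) : Matroid α := (M✶.Del C)✶

/-- A circuit is a minimal dependent set. -/
def IsCircuit₀ (M : Matroid α) (C : Set α) : Prop :=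
  M.Dep C ∧ ∀ ⦃D : Set α⦄, D ⊂ C → M.Indep D

/-- A cocircuit is a circuit of the dual matroid. -/
def IsCocircuit₀ (M : Matroid α) (C : Set α) : Prop := M✶.IsCircuit₀ C

/-- A triangle is a 3-element circuit. -/
def IsTriangle (M : Matroid α) (T : Set α) : Prop := M.IsCircuit₀ T ∧ T.encard = 3

/-- A triad is a 3-element cocircuit. -/
def IsTriad (M : Matroid α) (T : Set α) : Prop := M.IsCocircuit₀ T ∧ T.encard = 3

/-- A quad is a 4-element set that is both a circuit and a cocircuit. -/
def IsQuad (M : Matroid α) (Q : Set α) : Prop :=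
  M.IsCircuit₀ Q ∧ M.IsCocircuit₀ Q ∧ Q.encard = 4

/-- The rank (in `ℕ∞`) of a set in a matroid: the supremum of the cardinalities
of independent subsets of the set. -/
noncomputable def eRk₀ (M : Matroid α) (X : Set α) : ℕ∞ :=
  ⨆ I ∈ {I : Set α | M.Indep I ∧ I ⊆ X}, I.encard

/-- `M.ConnBddBy X k` says that the connectivity `λ_M(X) = r(X) + r(E − X) − r(M)`
is at most `k`, phrased without subtraction. -/
def ConnBddBy (M : Matroid α) (X : Set α) (k : ℕ) : Prop :=
  M.eRk₀ X + M.eRk₀ (M.E \ X) ≤ M.eRk₀ M.E + (k : ℕ∞)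

/-- `(X, Y)` is a `k`-separation of `M`: a partition of the ground set with both
sides of size at least `k` and `λ_M(X) ≤ k − 1`. -/
def IsKSep (M : Matroid α) (k : ℕ) (X Y : Set α) : Prop :=
  Disjoint X Y ∧ X ∪ Y = M.E ∧ (k : ℕ∞) ≤ X.encard ∧ (k : ℕ∞) ≤ Y.encard ∧
    M.ConnBddBy X (k - 1)

/-- A matroid is `n`-connected if it has no `k`-separation for any `k < n`. -/
def NConnected (M : Matroid α) (n : ℕ) : Prop :=
  ∀ k : ℕ, 0 < k → k < n → ∀ X Y : Set α, ¬ M.IsKSep k X Y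

/-- A matroid is 3-connected if it has no 1- or 2-separation. -/
def ThreeConnected (M : Matroid α) : Prop := M.NConnected 3

/-- A matroid is 4-connected if it has no 1-, 2- or 3-separation. -/
def FourConnected (M : Matroid α) : Prop := M.NConnected 4

/-- A matroid is `(4, k)`-connected if it is 3-connected and every 3-separation
has a side with at most `k` elements. -/
def FourKConnected (M : Matroid α) (k : ℕ) : Prop :=
  M.ThreeConnected ∧ ∀ X Y : Set α, M.IsKSep 3 X Y →
    X.encard ≤ (k : ℕ∞) ∨ Y.encard ≤ (k : ℕ∞)

/-- A matroid is internally 4-connected if it is (4, 3)-connected. -/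
def InternallyFourConnected (M : Matroid α) : Prop := M.FourKConnected 3

/-- A `(4, 3)`-violator is a 3-separation with both sides of size at least 4. -/
def Violator43 (M : Matroid α) (X Y : Set α) : Prop :=
  M.IsKSep 3 X Y ∧ (4 : ℕ∞) ≤ X.encard ∧ (4 : ℕ∞) ≤ Y.encard

/-- Two matroids are isomorphic if there is a bijection between their ground sets
carrying independent sets to independent sets in both directions. -/
def IsIsoTo (M : Matroid α) (N : Matroid β) : Prop :=
  ∃ e : M.E ≃ N.E, ∀ I : Set M.E,
    M.Indep (Subtype.val '' I) ↔ N.Indep (Subtype.val '' (e '' I))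

/-- `N` is a minor of `M` if it is obtained from `M` by contracting a set and
deleting a disjoint set. -/
def IsMinorOf (N M : Matroid α) : Prop :=
  ∃ C D : Set α, Disjoint C D ∧ C ⊆ M.E ∧ D ⊆ M.E ∧ N = (M.Con C).Del D

/-- `M` has an `N`-minor: a minor of `M` isomorphic to `N`. -/
def HasIsoMinor (M : Matroid α) (N : Matroid β) : Prop :=
  ∃ M₀ : Matroid α, M₀.IsMinorOf M ∧ M₀.IsIsoTo N

/-- `M` has a proper `N`-minor: a proper minor of `M` isomorphic to `N`. -/
def HasProperIsoMinor (M : Matroid α) (N : Matroid β) : Prop :=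
  ∃ M₀ : Matroid α, M₀.IsMinorOf M ∧ M₀ ≠ M ∧ M₀.IsIsoTo N

/-- A matroid is binary if it is representable over `GF(2)`. -/
def IsBinary (M : Matroid α) : Prop :=
  ∃ (ι : Type u) (v : α → ι → ZMod 2), ∀ I : Set α,
    M.Indep I ↔ I ⊆ M.E ∧ LinearIndependent (ZMod 2) (fun x : I => v x)

/-- A 4-fan: an ordering `(a, b, c, d)` of a 4-element set with `{a,b,c}` a
triangle and `{b,c,d}` a triad. -/
def Is4FanOrdering (M : Matroid α) (a b c d : α) : Prop :=
  ({a, b, c, d} : Set α).encard = 4 ∧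
    M.IsTriangle {a, b, c} ∧ M.IsTriad {b, c, d}

/-- A 5-fan: an ordering of a 5-element set whose alternating sequence contains
two triangles. -/
def Is5FanOrdering (M : Matroid α) (a b c d e : α) : Prop :=
  ({a, b, c, d, e} : Set α).encard = 5 ∧
    M.IsTriangle {a, b, c} ∧ M.IsTriad {b, c, d} ∧ M.IsTriangle {c, d, e}

/-- A 5-cofan: an ordering of a 5-element set whose alternating sequence contains
two triads. -/
def Is5CofanOrdering (M : Matroid α) (a b c d e : α) : Prop :=
  ({a, b, c, d, e} : Set α).encard = 5 ∧
    M.IsTriad {a, b, c} ∧ M.IsTriangle {b, c, d} ∧ M.IsTriad {c, d, e}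

/-- A fan ordering `(s 0, …, s (n-1))`: the consecutive triples form an
alternating sequence of triangles and triads. -/
def IsFanOrdering (M : Matroid α) (n : ℕ) (s : ℕ → α) : Prop :=
  3 ≤ n ∧ Set.InjOn s (Set.Iio n) ∧
    ((∀ i : ℕ, i + 3 ≤ n →
        (Even i → M.IsTriangle {s i, s (i + 1), s (i + 2)}) ∧
        (¬ Even i → M.IsTriad {s i, s (i + 1), s (i + 2)})) ∨
     (∀ i : ℕ, i + 3 ≤ n →
        (Even i → M.IsTriad {s i, s (i + 1), s (i + 2)}) ∧
        (¬ Even i → M.IsTriangle {s i, s (i + 1), s (i + 2)})))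

/-- The counterexample hypotheses on a pair `(M, N)`. -/
def CexHyp (M : Matroid α) (N : Matroid β) : Prop :=
  M.IsBinary ∧ N.IsBinary ∧
  M.InternallyFourConnected ∧ N.InternallyFourConnected ∧
  M.HasProperIsoMinor N ∧
  (8 : ℕ∞) ≤ N.E.encard ∧ (11 : ℕ∞) ≤ M.E.encard ∧
  (∀ T : Set α, M.IsTriangle T → ∀ e ∈ T, ¬ (M.Del {e}).HasIsoMinor N) ∧
  (∀ T : Set α, M.IsTriad T → ∀ e ∈ T, ¬ (M.Con {e}).HasIsoMinor N) ∧
  ¬ ∃ M' : Matroid α, M'.IsMinorOf M ∧ M'.InternallyFourConnected ∧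
      M'.HasIsoMinor N ∧
      M'.E.encard + 1 ≤ M.E.encard ∧ M.E.encard ≤ M'.E.encard + 2

end Matroid

open Matroid

/-!
Write `N = M ＼ e` and `T = Q - x`. As `Q` is a circuit, `x ∈ cl(T)`; as `Q` is a cocircuit,
no element of `Q` lies in the closure of a set avoiding `Q`. Let `(U, V)` be a 2-separation of
`N ＼ x`; as `|T| = 3` we may assume `|T ∩ V| ≤ 1`. If `T ⊆ U`, then `(U + x, V)` is a
2-separation of `N`. Otherwise `T ∩ V = {q}`, and moving `q` to `U` keeps `(U + q, V - q)`
2-separating, which reduces to the first case unless `V = {q, v}`. In that case `{x, q, v}` is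
3-separating in `N`, and submodularity of the connectivity function, applied to it and to the
3-separating set `Q`, makes `Q + v` 3-separating with at least five elements on each side,
which `(4, 4)`-connectivity forbids. Finally, a 2-separation `(U, V)` of `M ＼ x` with `e ∈ U`
restricts to a 2-separation `(U - e, V)` of `M ＼ x ＼ e` unless `U = {e, u}`; then either `u`
is a coloop of `M ＼ x ＼ e` or `{e, x}` is 2-separating in `M`.
-/

open Set

namespace Set

variable {α : Type*} {s t S U V : Set α} {a x : α}

lemma two_le_encard_iff_nontrivial : 2 ≤ s.encard ↔ s.Nontrivial := by
  rw [← one_lt_encard_iff_nontrivial, ← ENat.add_one_le_iff (by simp), one_add_one_eq_two]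

lemma le_encard_sdiff {m n : ℕ} (h : ((m + n : ℕ) : ℕ∞) ≤ s.encard) (ht : t.encard ≤ n) :
    (m : ℕ∞) ≤ (s \ t).encard := by
  have hs : s.encard ≤ (s \ t).encard + n :=
    (encard_le_encard_sdiff_add_encard s t).trans (by gcongr)
  rw [Nat.cast_add] at h
  exact (ENat.add_le_add_iff_right (ENat.natCast_ne_top n)).1 (h.trans hs)

lemma Nontrivial.eq_pair_of_not_nontrivial_sdiff (hs : s.Nontrivial) (ha : a ∈ s)
    (h : ¬ (s \ {a}).Nontrivial) : ∃ b, b ≠ a ∧ s = {a, b} := by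
  obtain ⟨b, hb, hba⟩ := hs.exists_ne a
  refine ⟨b, hba, ?_⟩
  rw [← insert_eq_of_mem ha, ← insert_sdiff_singleton,
    (not_nontrivial_iff.1 h).eq_singleton_of_mem ⟨hb, hba⟩]

lemma insert_union_eq_of_union_eq_sdiff (hd : Disjoint U V) (hu : U ∪ V = S \ {x}) (hx : x ∈ S) :
    Disjoint (insert x U) V ∧ insert x U ∪ V = S := by
  have hxV : x ∉ V := fun h ↦ (hu.subset (Or.inr h)).2 rfl
  refine ⟨disjoint_insert_left.2 ⟨hxV, hd⟩, ?_⟩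
  rw [insert_union, hu, insert_sdiff_singleton, insert_eq_of_mem hx]

end Set

namespace Matroid

variable {α : Type u} {M : Matroid α} {C D K Q S U V X Y : Set α} {a b e q v x : α} {k n : ℕ}

lemma isCircuit₀_iff : M.IsCircuit₀ C ↔ M.IsCircuit C := isCircuit_iff_forall_ssubset.symm

lemma isCocircuit₀_iff : M.IsCocircuit₀ C ↔ M.IsCocircuit C := isCircuit₀_iff

lemma eRk₀_eq_eRk (M : Matroid α) (X : Set α) : M.eRk₀ X = M.eRk X := by
  refine le_antisymm (iSup₂_le fun I hI ↦ hI.1.encard_le_eRk_of_subset hI.2) ?_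
  obtain ⟨I, hI⟩ := M.exists_isBasis' X
  rw [← hI.encard_eq_eRk]
  exact le_biSup (fun I ↦ I.encard)
    (show I ∈ {I | M.Indep I ∧ I ⊆ X} from ⟨hI.indep, hI.subset⟩)

lemma del_comm (M : Matroid α) (D₁ D₂ : Set α) : (M.Del D₁).Del D₂ = (M.Del D₂).Del D₁ :=
  M.delete_comm D₁ D₂

instance [M.RankFinite] (D : Set α) : (M.Del D).RankFinite := restrict_rankFinite _

/-- Junk value `0` on sets of infinite rank. -/
noncomputable def rk (M : Matroid α) (X : Set α) : ℕ := (M.eRk X).toNat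

lemma rk_del (hX : X ⊆ M.E \ D) : (M.Del D).rk X = M.rk X := by
  rw [rk, rk, Del, restrict_eRk_eq _ hX]

lemma rk_insert_of_mem_closure (h : a ∈ M.closure X) : M.rk (insert a X) = M.rk X := by
  simp [rk, ← eRk_insert_closure_eq, insert_eq_of_mem h, eRk_closure_eq]

lemma cast_rk (M : Matroid α) [M.RankFinite] (X : Set α) : (M.rk X : ℕ∞) = M.eRk X :=
  ENat.natCast_toNat (eRk_ne_top_iff.2 (M.isRkFinite_set X))

lemma rk_le_encard (M : Matroid α) [M.RankFinite] (X : Set α) : (M.rk X : ℕ∞) ≤ X.encard :=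
  (cast_rk M X).trans_le (M.eRk_le_encard X)

lemma rk_mono [M.RankFinite] (hXY : X ⊆ Y) : M.rk X ≤ M.rk Y := by
  simpa [← cast_rk] using M.eRk_mono hXY

lemma rk_insert_le (M : Matroid α) [M.RankFinite] (a : α) (X : Set α) :
    M.rk (insert a X) ≤ M.rk X + 1 := by
  have h := M.eRk_insert_le_add_one a X
  simp only [← cast_rk] at h
  exact_mod_cast h

lemma rk_insert_of_notMem_closure [M.RankFinite] (ha : a ∈ M.E) (h : a ∉ M.closure X) :
    M.rk (insert a X) = M.rk X + 1 := by
  have h' := eRk_insert_eq_add_one ⟨ha, h⟩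
  simp only [← cast_rk] at h'
  exact_mod_cast h'

lemma rk_submod (M : Matroid α) [M.RankFinite] (X Y : Set α) :
    M.rk (X ∩ Y) + M.rk (X ∪ Y) ≤ M.rk X + M.rk Y := by
  have h := M.eRk_submod X Y
  simp only [← cast_rk] at h
  exact_mod_cast h

lemma rk_compl_submod (M : Matroid α) [M.RankFinite] (X Y : Set α) :
    M.rk (M.E \ (X ∪ Y)) + M.rk (M.E \ (X ∩ Y)) ≤ M.rk (M.E \ X) + M.rk (M.E \ Y) := by
  have h := M.eRk_compl_union_add_eRk_compl_inter_le X Y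
  simp only [← cast_rk] at h
  exact_mod_cast h

/-- Submodularity of the connectivity function `λ(X) = r(X) + r(E - X) - r(M)`. -/
lemma rk_add_rk_compl_submod (M : Matroid α) [M.RankFinite] (X Y : Set α) :
    (M.rk (X ∩ Y) + M.rk (M.E \ (X ∩ Y))) + (M.rk (X ∪ Y) + M.rk (M.E \ (X ∪ Y))) ≤
      (M.rk X + M.rk (M.E \ X)) + (M.rk Y + M.rk (M.E \ Y)) := by
  have := M.rk_submod X Y
  have := M.rk_compl_submod X Y
  omega

lemma IsCocircuit.notMem_closure (hK : M.IsCocircuit K) (hq : q ∈ K) (hX : Disjoint X K) :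
    q ∉ M.closure X := by
  intro hcl
  obtain ⟨C, hCX, hC, hqC⟩ :=
    exists_isCircuit_of_mem_closure hcl fun h ↦ hX.notMem_of_mem_right hq h
  refine hC.inter_isCocircuit_ne_singleton hK
    (Subset.antisymm (fun y hy ↦ ?_) (singleton_subset_iff.2 ⟨hqC, hq⟩))
  obtain rfl | hyX := hCX hy.1
  · rfl
  · exact absurd hy.2 (hX.notMem_of_mem_left hyX)

lemma IsCocircuit.rk_insert [M.RankFinite] (hK : M.IsCocircuit K) (hq : q ∈ K)
    (hX : Disjoint X K) : M.rk (insert q X) = M.rk X + 1 :=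
  rk_insert_of_notMem_closure (hK.subset_ground hq) (hK.notMem_closure hq hX)

lemma IsQuad.rk_add_rk_compl_le [M.RankFinite] (hQ : M.IsQuad Q) :
    M.rk Q + M.rk (M.E \ Q) ≤ M.rk M.E + 2 := by
  obtain ⟨hC, hK, hQ4⟩ := hQ
  rw [isCircuit₀_iff] at hC
  rw [isCocircuit₀_iff] at hK
  have hrQ : M.rk Q = 3 := by
    have h := hC.eRk_add_one_eq
    rw [hQ4, ← cast_rk] at h
    have h' : M.rk Q + 1 = 3 + 1 := by exact_mod_cast h
    omega
  obtain ⟨q, hq⟩ := hK.nonempty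
  have hins := hK.rk_insert hq (disjoint_sdiff_left (t := M.E))
  have hmono := M.rk_mono (insert_subset (hK.subset_ground hq) (sdiff_subset (t := Q)))
  omega

/-- `(U, V)` is a `k`-separation of the restriction `M ↾ S`, measured with the rank of `M`. -/
def IsKSepOn (M : Matroid α) (S : Set α) (k : ℕ) (U V : Set α) : Prop :=
  Disjoint U V ∧ U ∪ V = S ∧ (k : ℕ∞) ≤ U.encard ∧ (k : ℕ∞) ≤ V.encard ∧
    M.rk U + M.rk V < M.rk S + k

lemma IsKSepOn.symm (h : M.IsKSepOn S k U V) : M.IsKSepOn S k V U := by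
  obtain ⟨hd, hu, hU, hV, hr⟩ := h
  exact ⟨hd.symm, by rwa [union_comm], hV, hU, by omega⟩

lemma isKSep_iff_isKSepOn [M.RankFinite] (hk : 0 < k) :
    M.IsKSep k U V ↔ M.IsKSepOn M.E k U V := by
  unfold IsKSep ConnBddBy IsKSepOn
  refine and_congr_right fun hd ↦ and_congr_right fun hu ↦ and_congr_right fun _ ↦
    and_congr_right fun _ ↦ ?_
  rw [show M.E \ U = V by rw [← hu, union_sdiff_left, hd.symm.sdiff_eq_left]]
  simp only [eRk₀_eq_eRk, ← cast_rk]
  norm_cast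
  omega

lemma isKSepOn_del_iff (hS : S ⊆ M.E \ D) :
    (M.Del D).IsKSepOn S k U V ↔ M.IsKSepOn S k U V := by
  unfold IsKSepOn
  refine and_congr_right fun _ ↦ and_congr_right fun hu ↦ ?_
  rw [rk_del ((hu ▸ subset_union_left).trans hS), rk_del ((hu ▸ subset_union_right).trans hS),
    rk_del hS]

lemma isKSep_del_iff [M.RankFinite] (hk : 0 < k) :
    (M.Del D).IsKSep k U V ↔ M.IsKSepOn (M.E \ D) k U V :=
  (isKSep_iff_isKSepOn hk).trans (isKSepOn_del_iff Subset.rfl)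

lemma NConnected.le_rk_add_rk [M.RankFinite] (h : M.NConnected n) (hk : 0 < k) (hkn : k < n)
    (hd : Disjoint U V) (hu : U ∪ V = M.E) (hU : (k : ℕ∞) ≤ U.encard)
    (hV : (k : ℕ∞) ≤ V.encard) : M.rk M.E + k ≤ M.rk U + M.rk V :=
  not_lt.1 fun hr ↦ h k hk hkn U V ((isKSep_iff_isKSepOn hk).2 ⟨hd, hu, hU, hV, hr⟩)

lemma FourKConnected.encard_le_of_isKSepOn [M.RankFinite] (h : M.FourKConnected n)
    (hs : M.IsKSepOn M.E 3 U V) : U.encard ≤ n ∨ V.encard ≤ n :=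
  h.2 U V ((isKSep_iff_isKSepOn (by norm_num)).2 hs)

lemma ThreeConnected.rankFinite (h : M.ThreeConnected) (hE : 4 ≤ M.E.encard) :
    M.RankFinite := by
  rw [← eRank_ne_top_iff]
  intro htop
  obtain ⟨A, hAE, hA⟩ := exists_subset_encard_eq ((show (2 : ℕ∞) ≤ 4 by norm_num).trans hE)
  refine h 2 (by norm_num) (by norm_num) A (M.E \ A) ⟨disjoint_sdiff_right,
    union_sdiff_cancel hAE, by simp [hA], le_encard_sdiff (n := 2) (by simpa using hE) hA.le, ?_⟩
  rw [ConnBddBy, eRk₀_eq_eRk M M.E, eRk_ground, htop, top_add]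
  exact le_top

lemma ThreeConnected.rk_pair_eq_two [M.RankFinite] (h : M.ThreeConnected)
    (hE : 4 ≤ M.E.encard) (ha : a ∈ M.E) (hb : b ∈ M.E) (hab : a ≠ b) : M.rk {a, b} = 2 := by
  have hsep := NConnected.le_rk_add_rk h (k := 2) (by norm_num) (by norm_num)
    disjoint_sdiff_right (union_sdiff_cancel (pair_subset ha hb)) (by simp [encard_pair hab])
    (le_encard_sdiff (n := 2) (by simpa using hE) (encard_pair hab).le)
  have hmono := M.rk_mono (sdiff_subset : M.E \ {a, b} ⊆ M.E)
  have hle := M.rk_le_encard {a, b}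
  rw [encard_pair hab] at hle
  norm_cast at hle
  omega

lemma ThreeConnected.not_isKSepOn_del_one [M.RankFinite] (h : M.ThreeConnected)
    (hE : 4 ≤ M.E.encard) (hx : x ∈ M.E) : ¬ M.IsKSepOn (M.E \ {x}) 1 U V := by
  intro hs
  wlog hU : 2 ≤ U.encard generalizing U V
  · refine this hs.symm (two_le_encard_iff_nontrivial.2 (not_subsingleton_iff.1 fun hV ↦ ?_))
    have hU' := encard_le_one_iff_subsingleton.2
      (not_nontrivial_iff.1 (mt two_le_encard_iff_nontrivial.2 hU))
    have h3 : (3 : ℕ∞) ≤ 1 + 1 := calc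
      (3 : ℕ∞) ≤ (M.E \ {x}).encard := le_encard_sdiff (n := 1) (by simpa using hE) (by simp)
      _ = (U ∪ V).encard := by rw [hs.2.1]
      _ ≤ 1 + 1 := (encard_union_le U V).trans
        (add_le_add hU' (encard_le_one_iff_subsingleton.2 hV))
    norm_num at h3
  obtain ⟨hd, hu, -, hV, hr⟩ := hs
  have hxV : x ∉ V := fun hxV ↦ (hu.subset (Or.inr hxV)).2 rfl
  obtain ⟨hd', hu'⟩ := insert_union_eq_of_union_eq_sdiff hd.symm (by rwa [union_comm]) hx
  have hsep := NConnected.le_rk_add_rk h (k := 2) (by norm_num) (by norm_num) hd'.symm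
    (by rwa [union_comm]) hU
    (by rw [encard_insert_of_notMem hxV]; exact_mod_cast add_le_add_left hV 1)
  have := M.rk_insert_le x V
  have := M.rk_mono (sdiff_subset : M.E \ {x} ⊆ M.E)
  omega

lemma ThreeConnected.not_isKSepOn_del_of_mem_closure [M.RankFinite] (h : M.ThreeConnected)
    (hxU : x ∈ M.closure U) : ¬ M.IsKSepOn (M.E \ {x}) 2 U V := by
  rintro ⟨hd, hu, hU, hV, hr⟩
  obtain ⟨hd', hu'⟩ := insert_union_eq_of_union_eq_sdiff hd hu (M.closure_subset_ground U hxU)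
  have hsep := NConnected.le_rk_add_rk h (k := 2) (by norm_num) (by norm_num) hd' hu'
    (hU.trans (encard_le_encard (subset_insert x U))) hV
  rw [rk_insert_of_mem_closure hxU] at hsep
  have := M.rk_mono (sdiff_subset : M.E \ {x} ⊆ M.E)
  omega

lemma IsCocircuit.isKSepOn_move [M.RankFinite] (hK : M.IsCocircuit K)
    (hs : M.IsKSepOn S k U V) (hqK : q ∈ K) (hqV : q ∈ V) (hVK : Disjoint (V \ {q}) K)
    (hk : (k : ℕ∞) ≤ (V \ {q}).encard) : M.IsKSepOn S k (insert q U) (V \ {q}) := by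
  obtain ⟨hd, hu, hU, -, hr⟩ := hs
  refine ⟨disjoint_insert_left.2 ⟨fun h ↦ h.2 rfl, hd.mono_right sdiff_subset⟩, ?_,
    hU.trans (encard_le_encard (subset_insert q U)), hk, ?_⟩
  · rw [insert_union, ← union_insert, insert_sdiff_singleton, insert_eq_of_mem hqV, hu]
  · have hins := hK.rk_insert hqK hVK
    rw [insert_sdiff_singleton, insert_eq_of_mem hqV] at hins
    have := M.rk_insert_le q U
    omega

lemma FourKConnected.not_isKSepOn_del_pair (hN : M.FourKConnected 4) (hE : 10 ≤ M.E.encard)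
    (hQ : M.IsQuad Q) (hxQ : x ∈ Q) (hqQ : q ∈ Q) (hqx : q ≠ x) (hvQ : v ∉ Q) :
    ¬ M.IsKSepOn (M.E \ {x}) 2 U {q, v} := by
  rintro ⟨hd, hu, -, -, hr⟩
  have hE4 : 4 ≤ M.E.encard := le_trans (by norm_num) hE
  have := hN.1.rankFinite hE4
  have hQE : Q ⊆ M.E := (isCocircuit₀_iff.1 hQ.2.1).subset_ground
  have hvE : v ∈ M.E \ {x} := hu.subset (Or.inr (Or.inr rfl))
  have hU : M.E \ insert x {q, v} = U := by
    rw [insert_eq, ← sdiff_sdiff, ← hu, union_sdiff_right, hd.sdiff_eq_left]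
  have hQS : Q ∩ insert x {q, v} = {x, q} := by
    ext y; simp only [mem_inter_iff, mem_insert_iff, mem_singleton_iff]; grind
  have hQS' : Q ∪ insert x {q, v} = insert v Q := by
    ext y; simp only [mem_union, mem_insert_iff, mem_singleton_iff]; grind
  have hsub := M.rk_add_rk_compl_submod Q (insert x {q, v})
  rw [hQS, hQS', hU] at hsub
  have hrqv := hN.1.rk_pair_eq_two hE4 (hQE hqQ) hvE.1 (ne_of_mem_of_not_mem hqQ hvQ)
  have hrxq := NConnected.le_rk_add_rk hN.1 (k := 2) (by norm_num) (by norm_num)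
    disjoint_sdiff_right (union_sdiff_cancel (pair_subset (hQE hxQ) (hQE hqQ)))
    (by simp [encard_pair hqx.symm])
    (le_encard_sdiff (n := 2) (by simpa using hE4) (encard_pair hqx.symm).le)
  have := hQ.rk_add_rk_compl_le
  have := M.rk_insert_le x {q, v}
  have := M.rk_mono (sdiff_subset : M.E \ {x} ⊆ M.E)
  have h5 : (insert v Q).encard = 5 := by
    rw [encard_insert_of_notMem hvQ, hQ.2.2]; norm_num
  have h5' : (5 : ℕ∞) ≤ (M.E \ insert v Q).encard :=
    le_encard_sdiff (n := 5) (by simpa using hE) h5.le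
  rcases hN.encard_le_of_isKSepOn ⟨disjoint_sdiff_right,
    union_sdiff_cancel (insert_subset hvE.1 hQE), by rw [h5]; norm_num,
    le_trans (by norm_num) h5', by omega⟩ with h | h
  · rw [h5] at h; norm_num at h
  · have := h5'.trans h; norm_num at this

lemma FourKConnected.not_isKSepOn_del_of_subsingleton_inter (hN : M.FourKConnected 4)
    (hE : 10 ≤ M.E.encard) (hQ : M.IsQuad Q) (hx : x ∈ Q)
    (hTV : ((Q \ {x}) ∩ V).Subsingleton) : ¬ M.IsKSepOn (M.E \ {x}) 2 U V := by
  intro hs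
  have := hN.1.rankFinite (le_trans (by norm_num) hE)
  have hC := isCircuit₀_iff.1 hQ.1
  have hxT : x ∈ M.closure (Q \ {x}) := hC.mem_closure_sdiff_singleton_of_mem hx
  by_cases hTU : Q \ {x} ⊆ U
  · exact hN.1.not_isKSepOn_del_of_mem_closure (M.closure_subset_closure hTU hxT) hs
  obtain ⟨q, hqT, hqU⟩ := not_subset.1 hTU
  have hT : Q \ {x} ⊆ U ∪ V := hs.2.1 ▸ sdiff_subset_sdiff_left hC.subset_ground
  have hqV : q ∈ V := (hT hqT).resolve_left hqU
  have hTVq : ∀ y ∈ Q \ {x}, y ∈ V → y = q := fun y hy hyV ↦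
    hTV ⟨hy, hyV⟩ ⟨hqT, hqV⟩
  have hVQ : Disjoint (V \ {q}) Q := disjoint_left.2 fun y hy hyQ ↦
    hy.2 (hTVq y ⟨hyQ, (hs.2.1.subset (Or.inr hy.1)).2⟩ hy.1)
  by_cases hV3 : (V \ {q}).Nontrivial
  · refine hN.1.not_isKSepOn_del_of_mem_closure (M.closure_subset_closure (fun y hy ↦ ?_) hxT)
      ((isCocircuit₀_iff.1 hQ.2.1).isKSepOn_move hs hqT.1 hqV hVQ
        (two_le_encard_iff_nontrivial.2 hV3))
    obtain hyU | hyV := hT hy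
    · exact mem_insert_of_mem q hyU
    · exact hTVq y hy hyV ▸ mem_insert q U
  · obtain ⟨v, hvq, rfl⟩ := (two_le_encard_iff_nontrivial.1 hs.2.2.2.1)
      |>.eq_pair_of_not_nontrivial_sdiff hqV hV3
    exact hN.not_isKSepOn_del_pair hE hQ hx hqT.1 hqT.2
      (hVQ.notMem_of_mem_left ⟨Or.inr rfl, hvq⟩) hs

lemma FourKConnected.threeConnected_del_of_mem_quad (hN : M.FourKConnected 4)
    (hE : 10 ≤ M.E.encard) (hQ : M.IsQuad Q) (hx : x ∈ Q) : (M.Del {x}).ThreeConnected := by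
  have hE4 : 4 ≤ M.E.encard := le_trans (by norm_num) hE
  have := hN.1.rankFinite hE4
  have hQE : Q ⊆ M.E := (isCocircuit₀_iff.1 hQ.2.1).subset_ground
  intro k hk hk3 U V hs
  rw [isKSep_del_iff hk] at hs
  interval_cases k
  · exact hN.1.not_isKSepOn_del_one hE4 (hQE hx) hs
  · wlog hTV : ((Q \ {x}) ∩ V).Subsingleton generalizing U V
    · refine this V U hs.symm
        (not_nontrivial_iff.1 fun hTU ↦ hTV (not_nontrivial_iff.1 fun hTV ↦ ?_))
      have h5 := add_le_add_left
        (add_le_add (two_le_encard_iff_nontrivial.2 hTU) (two_le_encard_iff_nontrivial.2 hTV)) 1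
      rw [← encard_union_eq (hs.1.mono inter_subset_right inter_subset_right),
        ← inter_union_distrib_left, hs.2.1, inter_eq_left.2 (sdiff_subset_sdiff_left hQE),
        encard_sdiff_singleton_add_one hx, hQ.2.2] at h5
      norm_num at h5
    exact hN.not_isKSepOn_del_of_subsingleton_inter hE hQ hx hTV hs

lemma ThreeConnected.not_isKSepOn_del_of_mem [M.RankFinite] (hM : M.ThreeConnected)
    (hE : 4 ≤ M.E.encard) (hx : x ∈ M.E) (h : ((M.Del {x}).Del {e}).ThreeConnected)
    (heU : e ∈ U) : ¬ M.IsKSepOn (M.E \ {x}) 2 U V := by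
  rintro ⟨hd, hu, hU, hV, hr⟩
  have hP : ∀ j, 0 < j → j < 3 → ∀ A B, ¬ M.IsKSepOn ((M.E \ {x}) \ {e}) j A B :=
    fun j hj hj3 A B hAB ↦
      h j hj hj3 A B ((isKSep_del_iff hj).2 ((isKSepOn_del_iff sdiff_subset).2 hAB))
  have hUE : U ⊆ M.E \ {x} := hu ▸ subset_union_left
  have hdU : Disjoint (U \ {e}) V := hd.mono_left sdiff_subset
  have huU : U \ {e} ∪ V = (M.E \ {x}) \ {e} := by
    rw [← hu, union_sdiff_distrib, sdiff_singleton_eq_self (hd.notMem_of_mem_left heU)]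
  have hUW : U ∪ ((M.E \ {x}) \ {e}) = M.E \ {x} :=
    (union_subset hUE sdiff_subset).antisymm fun y hy ↦
      (eq_or_ne y e).elim (fun hye ↦ Or.inl (hye ▸ heU)) fun hye ↦ Or.inr ⟨hy, hye⟩
  have hsub := M.rk_submod U ((M.E \ {x}) \ {e})
  rw [← inter_sdiff_assoc, inter_eq_left.2 hUE, hUW] at hsub
  by_cases hU3 : (U \ {e}).Nontrivial
  · exact hP 2 (by norm_num) (by norm_num) _ _
      ⟨hdU, huU, two_le_encard_iff_nontrivial.2 hU3, hV, by omega⟩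
  obtain ⟨a, haU, b, hbU, hab⟩ := two_le_encard_iff_nontrivial.1 hU
  have hrU := (hM.rk_pair_eq_two hE (hUE haU).1 (hUE hbU).1 hab).symm.trans_le
    (M.rk_mono (pair_subset haU hbU))
  by_cases hVr : M.rk V < M.rk ((M.E \ {x}) \ {e})
  · -- the single element of `U \ {e}` is a coloop of `M ＼ x ＼ e`
    obtain ⟨u, hu, hue⟩ := (two_le_encard_iff_nontrivial.1 hU).exists_ne e
    have h1 := (M.rk_le_encard (U \ {e})).trans
      (encard_le_one_iff_subsingleton.2 (not_nontrivial_iff.1 hU3))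
    norm_cast at h1
    exact hP 1 one_pos (by norm_num) _ _ ⟨hdU, huU,
      one_le_encard_iff_nonempty.2 ⟨u, hu, hue⟩, le_trans (by norm_num) hV, by omega⟩
  -- otherwise `{x, e}` is 2-separating in `M`
  have hxe : x ≠ e := fun hxe ↦ (hUE heU).2 hxe.symm
  have hsep := NConnected.le_rk_add_rk hM (k := 2) (by norm_num) (by norm_num)
    disjoint_sdiff_right (union_sdiff_cancel (pair_subset hx (hUE heU).1))
    (by simp [encard_pair hxe]) (le_encard_sdiff (n := 2) (by simpa using hE) (encard_pair hxe).le)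
  rw [show M.E \ {x, e} = (M.E \ {x}) \ {e} by rw [Set.sdiff_sdiff, singleton_union]] at hsep
  have hxe2 := M.rk_le_encard {x, e}
  rw [encard_pair hxe] at hxe2
  norm_cast at hxe2
  have := M.rk_mono (sdiff_subset : M.E \ {x} ⊆ M.E)
  omega

lemma ThreeConnected.threeConnected_del_of_threeConnected_del_del (hM : M.ThreeConnected)
    (hE : 4 ≤ M.E.encard) (hx : x ∈ M.E) (he : e ∈ M.E) (hxe : x ≠ e)
    (h : ((M.Del {x}).Del {e}).ThreeConnected) : (M.Del {x}).ThreeConnected := by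
  have := hM.rankFinite hE
  intro k hk hk3 U V hs
  rw [isKSep_del_iff hk] at hs
  interval_cases k
  · exact hM.not_isKSepOn_del_one hE hx hs
  · have heE : e ∈ M.E \ {x} := ⟨he, hxe.symm⟩
    wlog heU : e ∈ U generalizing U V
    · exact this V U hs.symm ((hs.2.1 ▸ heE : e ∈ U ∪ V).resolve_left heU)
    exact hM.not_isKSepOn_del_of_mem hE hx h heU hs

end Matroid

theorem statement_19_general {α : Type u} (M : Matroid α)
    (hMi4 : M.InternallyFourConnected) (hcard : (11 : ℕ∞) ≤ M.E.encard)
    (e : α) (he : e ∈ M.E) (h44 : (M.Del {e}).FourKConnected 4)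
    (Q : Set α) (hQ : (M.Del {e}).IsQuad Q) (x : α) (hx : x ∈ Q) :
    ((M.Del {x}).Del {e}).ThreeConnected ∧ (M.Del {x}).ThreeConnected := by
  have hxE : x ∈ M.E \ {e} := (isCocircuit₀_iff.1 hQ.2.1).subset_ground hx
  have hNx := h44.threeConnected_del_of_mem_quad
    (le_encard_sdiff (n := 1) (by simpa using hcard) (by simp)) hQ hx
  rw [del_comm] at hNx
  exact ⟨hNx, hMi4.1.threeConnected_del_of_threeConnected_del_del (le_trans (by norm_num) hcard)
    hxE.1 he hxE.2 hNx⟩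

/-- `M\x\e` and `M\x` are 3-connected. -/
theorem statement_19 {α : Type u} (M : Matroid α) (hMbin : M.IsBinary)
    (hMi4 : M.InternallyFourConnected) (hcard : (11 : ℕ∞) ≤ M.E.encard)
    (e : α) (he : e ∈ M.E) (h44 : (M.Del {e}).FourKConnected 4)
    (Q : Set α) (hQ : (M.Del {e}).IsQuad Q) (x : α) (hx : x ∈ Q) :
    ((M.Del {x}).Del {e}).ThreeConnected ∧ (M.Del {x}).ThreeConnected :=
  statement_19_general M hMi4 hcard e he h44 Q hQ x hx
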